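/- arXiv:2510.14461 — 3 statements merged into one kernel-verified Lean document; each statement's English description precedes it below -/
import Mathlib

section
/- For all complex numbers z1, z2, one has |Im((conj(z2) - conj(z1)) * (z2 * log(|z2|^2) - z1 * log(|z1|^2)))| ≤ 2 * |z1 - z2|^2, where z log(|z|^2) is interpreted as 0 when z = 0. -/
open Complex

/-! The imaginary part collapses to `Im(conj z₁ z₂) · (log|z₁|² - log|z₂|²)`, since the diagonal terms
`|zᵢ|² log|zᵢ|²` are real. If `|z₁| ≤ |z₂|`, then `|Im(conj z₁ z₂)| = |Im(conj z₁ (z₂ - z₁))| ≤ |z₁| |z₁ - z₂|`,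
and `|z₁| (log|z₂|² - log|z₁|²) ≤ 2 (|z₂| - |z₁|) ≤ 2 |z₁ - z₂|` by `log t ≤ t - 1`. -/

theorem im_conj_sub_mul_sub_ofReal (z w : ℂ) (x y : ℝ) :
    ((starRingEnd ℂ w - starRingEnd ℂ z) * (w * y - z * x)).im
      = (starRingEnd ℂ z * w).im * (x - y) := by
  simp only [mul_im, mul_re, sub_im, sub_re, conj_re, conj_im, ofReal_re, ofReal_im]
  ring

theorem abs_im_conj_mul_le (z w : ℂ) : |(starRingEnd ℂ z * w).im| ≤ ‖z‖ * ‖z - w‖ := by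
  have h : (starRingEnd ℂ z * w).im = (starRingEnd ℂ z * (w - z)).im := by
    simp only [mul_im, sub_re, sub_im, conj_re, conj_im]
    ring
  rw [h, ← norm_conj z, norm_sub_rev z w, ← norm_mul]
  exact abs_im_le_norm _

theorem Real.mul_abs_log_sq_sub_log_sq_le {a b : ℝ} (ha : 0 ≤ a) (hab : a ≤ b) :
    a * |Real.log (b ^ 2) - Real.log (a ^ 2)| ≤ 2 * (b - a) := by
  rcases ha.eq_or_lt with rfl | ha
  · simpa using hab
  have hb : 0 < b := ha.trans_le hab
  have hlog : Real.log (b ^ 2) - Real.log (a ^ 2) = 2 * Real.log (b / a) := by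
    rw [Real.log_pow, Real.log_pow, Real.log_div hb.ne' ha.ne']
    push_cast
    ring
  have hnonneg : 0 ≤ Real.log (b / a) := Real.log_nonneg ((one_le_div ha).mpr hab)
  calc a * |Real.log (b ^ 2) - Real.log (a ^ 2)| = 2 * (a * Real.log (b / a)) := by
        rw [hlog, abs_of_nonneg (by positivity)]
        ring
    _ ≤ 2 * (a * (b / a - 1)) := by
        gcongr
        exact Real.log_le_sub_one_of_pos (div_pos hb ha)
    _ = 2 * (b - a) := by
        field_simp

-- The convention `z log|z|² = 0` at `z = 0` is automatic, since `Real.log 0 = 0`.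
/-- The Cazenave–Haraux inequality:
`|Im((conj z2 - conj z1)(z2 log|z2|² - z1 log|z1|²))| ≤ 2|z1 - z2|²`.
The convention `z log|z|² = 0` for `z = 0` is automatic since `Real.log 0 = 0`. -/
theorem cazenave_haraux (z1 z2 : ℂ) :
    |(((starRingEnd ℂ) z2 - (starRingEnd ℂ) z1) *
        (z2 * (Real.log (‖z2‖ ^ 2) : ℂ)
          - z1 * (Real.log (‖z1‖ ^ 2) : ℂ))).im|
      ≤ 2 * ‖z1 - z2‖ ^ 2 := by
  wlog hle : ‖z1‖ ≤ ‖z2‖ generalizing z1 z2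
  · rw [norm_sub_rev]
    convert this z2 z1 (le_of_not_ge hle) using 3
    ring
  rw [im_conj_sub_mul_sub_ofReal, abs_mul, abs_sub_comm]
  calc |(starRingEnd ℂ z1 * z2).im| * |Real.log (‖z2‖ ^ 2) - Real.log (‖z1‖ ^ 2)|
      ≤ ‖z1 - z2‖ * (‖z1‖ * |Real.log (‖z2‖ ^ 2) - Real.log (‖z1‖ ^ 2)|) := by
        rw [mul_left_comm, ← mul_assoc]
        gcongr
        exact abs_im_conj_mul_le z1 z2
    _ ≤ ‖z1 - z2‖ * (2 * (‖z2‖ - ‖z1‖)) := by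
        gcongr ‖z1 - z2‖ * ?_
        exact Real.mul_abs_log_sq_sub_log_sq_le (norm_nonneg _) hle
    _ ≤ ‖z1 - z2‖ * (2 * ‖z1 - z2‖) := by
        gcongr
        rw [norm_sub_rev]
        exact norm_sub_norm_le z2 z1
    _ = 2 * ‖z1 - z2‖ ^ 2 := by ring
end

section
/- Let φ : ℝ^d → ℝ be C^∞ with bounded gradient and Hessian, let s* > 0 with s*·‖D²φ‖_∞ < 1, and for s ∈ [0, s*] let f_s(x) = x + s∇φ(x), a diffeomorphism of ℝ^d. Define ϕ(s, x) = φ(x) − (1/2)∫₀ˢ |∇φ(f_σ^{-1}(x))|² dσ. Then ∇_x ϕ(s, x) = ∇φ(f_s^{-1}(x)) for all (s, x) ∈ [0, s*] × ℝ^d. -/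
open MeasureTheory InnerProductSpace
set_option maxHeartbeats 1000000
set_option synthInstance.maxHeartbeats 1000000

variable {E : Type*} [NormedAddCommGroup E] [InnerProductSpace ℝ E] [CompleteSpace E]

lemma aux_grad_smooth {φ : E → ℝ} (hφ : ContDiff ℝ (⊤ : ℕ∞) φ) : ContDiff ℝ (⊤ : ℕ∞) (gradient φ) := by
  have h : gradient φ = ⇑(toDual ℝ E).symm ∘ fderiv ℝ φ := rfl
  rw [h]
  exact (toDual ℝ E).symm.contDiff.comp (hφ.fderiv_right (by simp))

lemma aux_symm {φ : E → ℝ} (hφ : ContDiff ℝ (⊤ : ℕ∞) φ) (y u w : E) :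
    ⟪fderiv ℝ (gradient φ) y u, w⟫_ℝ = ⟪u, fderiv ℝ (gradient φ) y w⟫_ℝ := by
  have hd1 : ∀ z, HasFDerivAt φ (fderiv ℝ φ z) z := fun z =>
    (hφ.differentiable (by simp) z).hasFDerivAt
  have hd2 : HasFDerivAt (fderiv ℝ φ) (fderiv ℝ (fderiv ℝ φ) y) y :=
    ((hφ.fderiv_right (m := (⊤ : ℕ∞)) (by simp)).differentiable (by simp) y).hasFDerivAt
  have hsymm := second_derivative_symmetric hd1 hd2
  have h : gradient φ = ⇑(toDual ℝ E).symm ∘ fderiv ℝ φ := rfl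
  rw [h, LinearIsometryEquiv.comp_fderiv]
  simp only [ContinuousLinearMap.coe_comp', Function.comp_apply,
    LinearIsometryEquiv.coe_coe'', toDual_symm_apply]
  rw [toDual_symm_apply, real_inner_comm, toDual_symm_apply, hsymm]

lemma aux_G_lip {φ : E → ℝ} (hφ : ContDiff ℝ (⊤ : ℕ∞) φ) {KH : ℝ}
    (hKH : ∀ x, ‖fderiv ℝ (gradient φ) x‖ ≤ KH) (p q : E) :
    ‖gradient φ p - gradient φ q‖ ≤ KH * ‖p - q‖ := by
  have hG := aux_grad_smooth hφ
  exact Convex.norm_image_sub_le_of_norm_fderiv_le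
    (fun z _ => hG.differentiable (by simp) z)
    (fun z _ => hKH z) convex_univ (Set.mem_univ q) (Set.mem_univ p)

lemma aux_key {φ : E → ℝ} (hφ : ContDiff ℝ (⊤ : ℕ∞) φ) {Kg KH : ℝ}
    (hKg : ∀ x, ‖gradient φ x‖ ≤ Kg)
    (hKH : ∀ x, ‖fderiv ℝ (gradient φ) x‖ ≤ KH)
    {sStar : ℝ} (hsK : sStar * KH < 1)
    (hbij : ∀ s ∈ Set.Icc (0 : ℝ) sStar,
      Function.Bijective (fun y => y + s • gradient φ y))
    {σ τ : ℝ} (hσ : σ ∈ Set.Icc (0 : ℝ) sStar) (hτ : τ ∈ Set.Icc (0 : ℝ) sStar)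
    (x₁ x₂ : E) :
    ‖Function.invFun (fun y => y + σ • gradient φ y) x₁ -
      Function.invFun (fun y => y + τ • gradient φ y) x₂‖ ≤
      (1 - sStar * KH)⁻¹ * (‖x₁ - x₂‖ + Kg * |σ - τ|) := by
  have hKH0 : 0 ≤ KH := le_trans (norm_nonneg _) (hKH x₁)
  have hδ : 0 < 1 - sStar * KH := by linarith
  set G := gradient φ with hG
  set a := Function.invFun (fun y => y + σ • G y) x₁ with ha'
  set b := Function.invFun (fun y => y + τ • G y) x₂ with hb'
  have ha : a + σ • G a = x₁ := Function.invFun_eq ((hbij σ hσ).2 x₁)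
  have hb : b + τ • G b = x₂ := Function.invFun_eq ((hbij τ hτ).2 x₂)
  have h1 : (a - b) + σ • (G a - G b) = (x₁ - x₂) - (σ - τ) • G b := by
    rw [smul_sub, sub_smul, ← ha, ← hb]; abel
  have hGab : ‖σ • (G a - G b)‖ ≤ sStar * KH * ‖a - b‖ := by
    rw [norm_smul, Real.norm_eq_abs, abs_of_nonneg hσ.1]
    have h2 := aux_G_lip hφ hKH a b
    rw [← hG] at h2
    have hσs : σ ≤ sStar := hσ.2
    nlinarith [mul_le_mul_of_nonneg_left h2 hσ.1,
      mul_le_mul_of_nonneg_right (mul_le_mul_of_nonneg_right hσs hKH0) (norm_nonneg (a - b))]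
  have h2 : ‖a - b‖ - sStar * KH * ‖a - b‖ ≤ ‖(a - b) + σ • (G a - G b)‖ := by
    have h3 : ‖a - b‖ ≤ ‖(a - b) + σ • (G a - G b)‖ + ‖σ • (G a - G b)‖ := by
      calc ‖a - b‖ = ‖((a - b) + σ • (G a - G b)) - σ • (G a - G b)‖ := by
            rw [add_sub_cancel_right]
        _ ≤ _ := norm_sub_le _ _
    linarith
  have h3 : ‖(x₁ - x₂) - (σ - τ) • G b‖ ≤ ‖x₁ - x₂‖ + Kg * |σ - τ| := by
    refine le_trans (norm_sub_le _ _) ?_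
    have : ‖(σ - τ) • G b‖ ≤ |σ - τ| * Kg := by
      rw [norm_smul, Real.norm_eq_abs]
      exact mul_le_mul_of_nonneg_left (hKg b) (abs_nonneg _)
    linarith [this, mul_comm (|σ - τ|) Kg]
  have hkey : (1 - sStar * KH) * ‖a - b‖ ≤ ‖x₁ - x₂‖ + Kg * |σ - τ| := by
    rw [h1] at h2; nlinarith
  calc ‖a - b‖ = (1 - sStar * KH)⁻¹ * ((1 - sStar * KH) * ‖a - b‖) := by
        field_simp
    _ ≤ _ := mul_le_mul_of_nonneg_left hkey (le_of_lt (inv_pos.2 hδ))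

lemma aux_grad_smooth' {φ : E → ℝ} (hφ : ContDiff ℝ (⊤ : ℕ∞) φ) : ContDiff ℝ (⊤ : ℕ∞) (gradient φ) := by
  have h : gradient φ = ⇑(toDual ℝ E).symm ∘ fderiv ℝ φ := rfl
  rw [h]
  exact (toDual ℝ E).symm.contDiff.comp (hφ.fderiv_right (by simp))

lemma aux_deriv {φ : E → ℝ} (hφ : ContDiff ℝ (⊤ : ℕ∞) φ) {KH : ℝ}
    (hKH : ∀ x, ‖fderiv ℝ (gradient φ) x‖ ≤ KH)
    {sStar : ℝ} (hsK : sStar * KH < 1)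
    (hbij : ∀ s ∈ Set.Icc (0 : ℝ) sStar,
      Function.Bijective (fun y => y + s • gradient φ y))
    {σ₀ : ℝ} (hσ₀ : σ₀ ∈ Set.Ioo (0 : ℝ) sStar) (x : E) :
    HasFDerivAt (fun z => Function.invFun (fun y => y + σ₀ • gradient φ y) z)
      (Ring.inverse (1 + σ₀ • fderiv ℝ (gradient φ)
        (Function.invFun (fun y => y + σ₀ • gradient φ y) x))) x ∧
    HasDerivAt (fun a => Function.invFun (fun y => y + a • gradient φ y) x)
      (-(Ring.inverse (1 + σ₀ • fderiv ℝ (gradient φ)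
          (Function.invFun (fun y => y + σ₀ • gradient φ y) x))
        (gradient φ (Function.invFun (fun y => y + σ₀ • gradient φ y) x)))) σ₀ := by
  have hGc := aux_grad_smooth' hφ
  have hKH0 : 0 ≤ KH := le_trans (norm_nonneg _) (hKH x)
  set y₀ := Function.invFun (fun y => y + σ₀ • gradient φ y) x with hy₀
  set A : E →L[ℝ] E := fderiv ℝ (gradient φ) y₀ with hA
  have hnorm : ‖-(σ₀ • A)‖ < 1 := by
    rw [norm_neg]
    calc ‖σ₀ • A‖ ≤ ‖σ₀‖ * ‖A‖ := ContinuousLinearMap.opNorm_smul_le _ _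
      _ = σ₀ * ‖A‖ := by rw [Real.norm_eq_abs, abs_of_nonneg hσ₀.1.le]
      _ ≤ σ₀ * KH := mul_le_mul_of_nonneg_left (hKH y₀) hσ₀.1.le
      _ ≤ sStar * KH := mul_le_mul_of_nonneg_right hσ₀.2.le hKH0
      _ < 1 := hsK
  set U : (E →L[ℝ] E)ˣ := Units.oneSub _ hnorm with hU
  have hUval : (U : E →L[ℝ] E) = 1 + σ₀ • A := sub_neg_eq_add _ _
  have hIsU : IsUnit (1 + σ₀ • A) := ⟨U, hUval⟩
  set B : E →L[ℝ] E := Ring.inverse (1 + σ₀ • A) with hB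
  have hmul1 : (1 + σ₀ • A) * B = 1 := Ring.mul_inverse_cancel _ hIsU
  have hmul2 : B * (1 + σ₀ • A) = 1 := Ring.inverse_mul_cancel _ hIsU
  have hBu : ∀ w, B ((1 + σ₀ • A) w) = w := fun w => by
    rw [← ContinuousLinearMap.mul_apply, hmul2, ContinuousLinearMap.one_apply]
  have huB : ∀ w, (1 + σ₀ • A) (B w) = w := fun w => by
    rw [← ContinuousLinearMap.mul_apply, hmul1, ContinuousLinearMap.one_apply]
  set fst := ContinuousLinearMap.fst ℝ ℝ E with hfst
  set snd := ContinuousLinearMap.snd ℝ ℝ E with hsnd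
  set M : (ℝ × E) →L[ℝ] (ℝ × E) :=
    fst.prod ((1 + σ₀ • A).comp snd + fst.smulRight (gradient φ y₀)) with hM
  set N : (ℝ × E) →L[ℝ] (ℝ × E) :=
    fst.prod (B.comp (snd - fst.smulRight (gradient φ y₀))) with hN
  have hMval : ∀ p : ℝ × E, M p = (p.1, (1 + σ₀ • A) p.2 + p.1 • gradient φ y₀) := by
    intro p
    simp [hM, hfst, hsnd]
  have hNval : ∀ p : ℝ × E, N p = (p.1, B (p.2 - p.1 • gradient φ y₀)) := by
    intro p
    simp [hN, hfst, hsnd]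
  have hNM : Function.LeftInverse N M := by
    intro p
    rw [hMval p, hNval _]
    simp only [add_sub_cancel_right, hBu]
  have hMN : Function.RightInverse N M := by
    intro p
    rw [hNval p, hMval _]
    simp only [huB, sub_add_cancel]
  set e : (ℝ × E) ≃L[ℝ] (ℝ × E) := ContinuousLinearEquiv.equivOfInverse M N hNM hMN with he
  have hG_strict : HasStrictFDerivAt (gradient φ) A y₀ :=
    (hGc.contDiffAt).hasStrictFDerivAt (by simp)
  have hT : HasStrictFDerivAt (fun p : ℝ × E => (p.1, p.2 + p.1 • gradient φ p.2))
      (e : (ℝ × E) →L[ℝ] (ℝ × E)) (σ₀, y₀) := by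
    have h1 : HasStrictFDerivAt (fun p : ℝ × E => p.2 + p.1 • gradient φ p.2)
        (snd + (σ₀ • (A.comp snd) + fst.smulRight (gradient φ y₀))) (σ₀, y₀) :=
      hasStrictFDerivAt_snd.add
        (hasStrictFDerivAt_fst.smul (hG_strict.comp ((σ₀, y₀) : ℝ × E) hasStrictFDerivAt_snd))
    have h2 := hasStrictFDerivAt_fst.prodMk h1
    have h3 : (e : (ℝ × E) →L[ℝ] (ℝ × E)) =
        fst.prod (snd + (σ₀ • (A.comp snd) + fst.smulRight (gradient φ y₀))) := by
      refine ContinuousLinearMap.ext fun p => ?_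
      have : (e : (ℝ × E) →L[ℝ] (ℝ × E)) p = M p := rfl
      rw [this, hMval]
      simp [hfst, hsnd]
      abel
    rw [h3]
    exact h2
  have hmem : {p : ℝ × E | p.1 ∈ Set.Ioo (0:ℝ) sStar} ∈ nhds (σ₀, y₀) :=
    (isOpen_Ioo.preimage continuous_fst).mem_nhds hσ₀
  have hgs : HasStrictFDerivAt
      (fun q : ℝ × E => (q.1, Function.invFun (fun y => y + q.1 • gradient φ y) q.2))
      ((e.symm : (ℝ × E) ≃L[ℝ] (ℝ × E)) : (ℝ × E) →L[ℝ] (ℝ × E)) ((σ₀ : ℝ), x) := by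
    have h := hT.to_local_left_inverse
      (g := fun q : ℝ × E => (q.1, Function.invFun (fun y => y + q.1 • gradient φ y) q.2))
      (by
        filter_upwards [hmem] with p hp
        show (p.1, Function.invFun (fun y => y + p.1 • gradient φ y)
          (p.2 + p.1 • gradient φ p.2)) = p
        exact Prod.ext rfl
          (Function.leftInverse_invFun (hbij p.1 (Set.Ioo_subset_Icc_self hp)).1 p.2))
    have hTp : y₀ + σ₀ • gradient φ y₀ = x :=
      Function.invFun_eq ((hbij σ₀ (Set.Ioo_subset_Icc_self hσ₀)).2 x)
    have hpt : ((fun p : ℝ × E => (p.1, p.2 + p.1 • gradient φ p.2)) (σ₀, y₀)) = ((σ₀ : ℝ), x) :=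
      Prod.ext rfl hTp
    simpa only [hTp] using h
  have hesymm : ((e.symm : (ℝ × E) ≃L[ℝ] (ℝ × E)) : (ℝ × E) →L[ℝ] (ℝ × E)) = N := by
    refine ContinuousLinearMap.ext fun p => ?_
    apply e.injective
    show e (e.symm p) = M (N p)
    rw [e.apply_symm_apply, hMN p]
  constructor
  · have hz : HasFDerivAt (fun z : E => ((σ₀, z) : ℝ × E))
        (((0 : E →L[ℝ] ℝ)).prod (ContinuousLinearMap.id ℝ E)) x :=
      (hasFDerivAt_const σ₀ x).prodMk (hasFDerivAt_id x)
    have hcomp := (hgs.hasFDerivAt.comp x hz)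
    have hcomp2 := hasFDerivAt_snd.comp x hcomp
    have hD : (ContinuousLinearMap.snd ℝ ℝ E).comp
        (((e.symm : (ℝ × E) ≃L[ℝ] (ℝ × E)) : (ℝ × E) →L[ℝ] (ℝ × E)).comp
          (((0 : E →L[ℝ] ℝ)).prod (ContinuousLinearMap.id ℝ E))) = B := by
      rw [hesymm]
      refine ContinuousLinearMap.ext fun w => ?_
      simp [hNval, hfst, hsnd]
    rw [hD] at hcomp2
    exact hcomp2
  · have hz : HasFDerivAt (fun a : ℝ => ((a, x) : ℝ × E))
        ((ContinuousLinearMap.id ℝ ℝ).prod (0 : ℝ →L[ℝ] E)) σ₀ :=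
      (hasFDerivAt_id σ₀).prodMk (hasFDerivAt_const x σ₀)
    have hcomp := (hgs.hasFDerivAt.comp σ₀ hz)
    have hcomp2 := (hasFDerivAt_snd.comp σ₀ hcomp).hasDerivAt
    have hD : (ContinuousLinearMap.snd ℝ ℝ E).comp
        (((e.symm : (ℝ × E) ≃L[ℝ] (ℝ × E)) : (ℝ × E) →L[ℝ] (ℝ × E)).comp
          ((ContinuousLinearMap.id ℝ ℝ).prod (0 : ℝ →L[ℝ] E))) 1 = -(B (gradient φ y₀)) := by
      rw [hesymm]
      simp [hNval, hfst, hsnd]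
    rw [hD] at hcomp2
    exact hcomp2

lemma aux_symm' {φ : E → ℝ} (hφ : ContDiff ℝ (⊤ : ℕ∞) φ) (y u w : E) :
    ⟪fderiv ℝ (gradient φ) y u, w⟫_ℝ = ⟪u, fderiv ℝ (gradient φ) y w⟫_ℝ := by
  have hd1 : ∀ z, HasFDerivAt φ (fderiv ℝ φ z) z := fun z =>
    (hφ.differentiable (by simp) z).hasFDerivAt
  have hd2 : HasFDerivAt (fderiv ℝ φ) (fderiv ℝ (fderiv ℝ φ) y) y :=
    ((hφ.fderiv_right (m := (⊤ : ℕ∞)) (by simp)).differentiable (by simp) y).hasFDerivAt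
  have hsymm := second_derivative_symmetric hd1 hd2
  have h : gradient φ = ⇑(toDual ℝ E).symm ∘ fderiv ℝ φ := rfl
  rw [h, LinearIsometryEquiv.comp_fderiv]
  simp only [ContinuousLinearMap.coe_comp', Function.comp_apply,
    LinearIsometryEquiv.coe_coe'', toDual_symm_apply]
  rw [toDual_symm_apply, real_inner_comm, toDual_symm_apply, hsymm]

lemma aux_ptwise {φ : E → ℝ} (hφ : ContDiff ℝ (⊤ : ℕ∞) φ) {σ : ℝ} (y : E)
    (hu : IsUnit (1 + σ • fderiv ℝ (gradient φ) y)) :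
    (toDual ℝ E).symm (2 • ((innerSL ℝ (gradient φ y)).comp
        ((fderiv ℝ (gradient φ) y).comp
          (Ring.inverse (1 + σ • fderiv ℝ (gradient φ) y))))) =
      2 • ((fderiv ℝ (gradient φ) y)
        ((Ring.inverse (1 + σ • fderiv ℝ (gradient φ) y)) (gradient φ y))) := by
  set A : E →L[ℝ] E := fderiv ℝ (gradient φ) y with hA
  set B : E →L[ℝ] E := Ring.inverse (1 + σ • A) with hB
  have hmul1 : (1 + σ • A) * B = 1 := Ring.mul_inverse_cancel _ hu
  have hmul2 : B * (1 + σ • A) = 1 := Ring.inverse_mul_cancel _ hu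
  have hBu : ∀ w, B ((1 + σ • A) w) = w := fun w => by
    rw [← ContinuousLinearMap.mul_apply, hmul2, ContinuousLinearMap.one_apply]
  have huB : ∀ w, (1 + σ • A) (B w) = w := fun w => by
    rw [← ContinuousLinearMap.mul_apply, hmul1, ContinuousLinearMap.one_apply]
  have hsa : ∀ u w : E, ⟪A u, w⟫_ℝ = ⟪u, A w⟫_ℝ := fun u w => aux_symm' hφ y u w
  have husa : ∀ u w : E, ⟪(1 + σ • A) u, w⟫_ℝ = ⟪u, (1 + σ • A) w⟫_ℝ := by
    intro u w
    simp only [ContinuousLinearMap.add_apply, ContinuousLinearMap.one_apply,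
      ContinuousLinearMap.smul_apply, inner_add_left, inner_add_right,
      real_inner_smul_left, real_inner_smul_right, hsa]
  have hBsa : ∀ u w : E, ⟪B u, w⟫_ℝ = ⟪u, B w⟫_ℝ := by
    intro u w
    calc ⟪B u, w⟫_ℝ = ⟪B u, (1 + σ • A) (B w)⟫_ℝ := by rw [huB]
      _ = ⟪(1 + σ • A) (B u), B w⟫_ℝ := (husa _ _).symm
      _ = ⟪u, B w⟫_ℝ := by rw [huB]
  have hABcomm : A * (1 + σ • A) = (1 + σ • A) * A := by
    rw [mul_add, add_mul, mul_one, one_mul, mul_smul_comm, smul_mul_assoc]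
  have hcomm : B * A = A * B := by
    calc B * A = B * (A * ((1 + σ • A) * B)) := by rw [hmul1, mul_one]
      _ = B * ((A * (1 + σ • A)) * B) := by rw [← mul_assoc A]
      _ = B * (((1 + σ • A) * A) * B) := by rw [hABcomm]
      _ = B * ((1 + σ • A) * (A * B)) := by rw [mul_assoc (1 + σ • A) A B]
      _ = (B * (1 + σ • A)) * (A * B) := by rw [← mul_assoc B]
      _ = A * B := by rw [hmul2, one_mul]
  have hcommv : ∀ v, B (A v) = A (B v) := fun v => by
    rw [← ContinuousLinearMap.mul_apply, ← ContinuousLinearMap.mul_apply, hcomm]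
  suffices h2 : (2 • ((innerSL ℝ (gradient φ y)).comp (A.comp B)) : E →L[ℝ] ℝ) =
      toDual ℝ E (2 • A (B (gradient φ y))) by
    rw [h2, LinearIsometryEquiv.symm_apply_apply]
  refine ContinuousLinearMap.ext fun w => ?_
  rw [toDual_apply_apply]
  simp only [two_smul, ContinuousLinearMap.add_apply, ContinuousLinearMap.coe_comp',
    Function.comp_apply, innerSL_apply_apply, inner_add_left]
  congr 1 <;>
  · calc ⟪gradient φ y, A (B w)⟫_ℝ = ⟪A (gradient φ y), B w⟫_ℝ := (hsa _ _).symm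
      _ = ⟪B (A (gradient φ y)), w⟫_ℝ := (hBsa _ _).symm
      _ = ⟪A (B (gradient φ y)), w⟫_ℝ := by rw [hcommv]

lemma aux_isUnit {φ : E → ℝ} {KH : ℝ}
    (hKH : ∀ x, ‖fderiv ℝ (gradient φ) x‖ ≤ KH)
    {sStar : ℝ} (hsK : sStar * KH < 1) {σ : ℝ} (hσ : σ ∈ Set.Icc (0 : ℝ) sStar) (y : E) :
    IsUnit (1 + σ • fderiv ℝ (gradient φ) y) := by
  have hKH0 : 0 ≤ KH := le_trans (norm_nonneg _) (hKH y)
  have hnorm : ‖-(σ • fderiv ℝ (gradient φ) y)‖ < 1 := by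
    rw [norm_neg]
    calc ‖σ • fderiv ℝ (gradient φ) y‖ ≤ ‖σ‖ * ‖fderiv ℝ (gradient φ) y‖ :=
          ContinuousLinearMap.opNorm_smul_le _ _
      _ = σ * ‖fderiv ℝ (gradient φ) y‖ := by rw [Real.norm_eq_abs, abs_of_nonneg hσ.1]
      _ ≤ σ * KH := mul_le_mul_of_nonneg_left (hKH y) hσ.1
      _ ≤ sStar * KH := mul_le_mul_of_nonneg_right hσ.2 hKH0
      _ < 1 := hsK
  exact ⟨Units.oneSub _ hnorm, sub_neg_eq_add _ _⟩

/-- With `ϕ(s,x) = φ(x) - (1/2)∫₀ˢ ‖∇φ(f_σ⁻¹(x))‖² dσ` where `f_σ(y) = y + σ∇φ(y)`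
is a diffeomorphism, the spatial gradient of `ϕ(s,·)` is `∇φ(f_s⁻¹(x))`. -/
theorem eikonal_gradient_formula (d : ℕ) (φ : EuclideanSpace ℝ (Fin d) → ℝ)
    (hφ : ContDiff ℝ (⊤ : ℕ∞) φ) (Kg KH : ℝ)
    (hKg : ∀ x, ‖gradient φ x‖ ≤ Kg)
    (hKH : ∀ x, ‖fderiv ℝ (fun y => gradient φ y) x‖ ≤ KH)
    (sStar : ℝ) (hsStar : 0 < sStar) (hsK : sStar * KH < 1)
    (hbij : ∀ s ∈ Set.Icc (0 : ℝ) sStar,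
      Function.Bijective (fun y => y + s • gradient φ y))
    (ϕ : ℝ → EuclideanSpace ℝ (Fin d) → ℝ)
    (hϕ : ∀ s ∈ Set.Icc (0 : ℝ) sStar, ∀ x, ϕ s x = φ x - (1/2) *
      ∫ σ in (0 : ℝ)..s,
        ‖gradient φ (Function.invFun (fun y => y + σ • gradient φ y) x)‖ ^ 2)
    (s : ℝ) (hs : s ∈ Set.Icc (0 : ℝ) sStar) (x : EuclideanSpace ℝ (Fin d)) :
    gradient (ϕ s) x = gradient φ (Function.invFun (fun y => y + s • gradient φ y) x) := by
  classical
  have hs0 : (0:ℝ) ≤ s := hs.1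
  have hssStar : s ≤ sStar := hs.2
  have hKH' : ∀ z : EuclideanSpace ℝ (Fin d), ‖fderiv ℝ (gradient φ) z‖ ≤ KH := hKH
  have hGc : ContDiff ℝ (⊤ : ℕ∞) (gradient φ) := aux_grad_smooth hφ
  have hKg0 : 0 ≤ Kg := le_trans (norm_nonneg _) (hKg x)
  have hKH0 : 0 ≤ KH := le_trans (norm_nonneg _) (hKH' x)
  have hδ : 0 < 1 - sStar * KH := by linarith
  set L : ℝ := (1 - sStar * KH)⁻¹ with hLdef
  have hL0 : 0 ≤ L := (inv_pos.2 hδ).le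
  set c : ℝ → EuclideanSpace ℝ (Fin d) → EuclideanSpace ℝ (Fin d) := fun σ z => Function.invFun (fun y => y + σ • gradient φ y) z with hcdef
  set A : EuclideanSpace ℝ (Fin d) → EuclideanSpace ℝ (Fin d) →L[ℝ] EuclideanSpace ℝ (Fin d) := fun y => fderiv ℝ (gradient φ) y with hAdef
  set B : ℝ → EuclideanSpace ℝ (Fin d) →L[ℝ] EuclideanSpace ℝ (Fin d) := fun σ => Ring.inverse (1 + σ • A (c σ x)) with hBdef
  set Gv : ℝ → EuclideanSpace ℝ (Fin d) := fun σ => gradient φ (c σ x) with hGvdef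
  set F' : ℝ → EuclideanSpace ℝ (Fin d) →L[ℝ] ℝ :=
    fun σ => 2 • ((innerSL ℝ (Gv σ)).comp ((A (c σ x)).comp (B σ))) with hF'def
  -- Lipschitz continuity of c in σ
  have hCc : ∀ x' : EuclideanSpace ℝ (Fin d), ContinuousOn (fun σ => c σ x') (Set.Icc (0:ℝ) sStar) := by
    intro x'
    refine (LipschitzOnWith.of_dist_le' (K := L * Kg) ?_).continuousOn
    intro σ hσ τ hτ
    rw [dist_eq_norm, Real.dist_eq]
    have h := aux_key hφ hKg hKH' hsK hbij hσ hτ x' x'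
    simp only [sub_self, norm_zero, zero_add] at h
    calc ‖c σ x' - c τ x'‖ ≤ (1 - sStar * KH)⁻¹ * (Kg * |σ - τ|) := h
      _ = L * Kg * |σ - τ| := by rw [hLdef, mul_assoc]
  -- unit property
  have hIsU : ∀ σ ∈ Set.Icc (0:ℝ) sStar, IsUnit (1 + σ • A (c σ x)) :=
    fun σ hσ => aux_isUnit hKH' hsK hσ (c σ x)
  -- continuity facts
  have hAcont : Continuous A := (hGc.fderiv_right (m := (⊤ : ℕ∞)) (by simp)).continuous
  have hCcx : ContinuousOn (fun σ => c σ x) (Set.Icc (0:ℝ) sStar) := hCc x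
  have hwcont : ContinuousOn (fun σ => 1 + σ • A (c σ x)) (Set.Icc (0:ℝ) sStar) :=
    continuousOn_const.add (continuousOn_id.smul (hAcont.comp_continuousOn hCcx))
  have hBcont : ContinuousOn B (Set.Icc (0:ℝ) sStar) := by
    intro σ hσ
    have h1 : ContinuousAt Ring.inverse (1 + σ • A (c σ x)) := by
      rw [← (hIsU σ hσ).unit_spec]
      exact NormedRing.inverse_continuousAt ((hIsU σ hσ).unit)
    have h2 : ContinuousWithinAt (Ring.inverse ∘ (fun σ => 1 + σ • A (c σ x)))
        (Set.Icc (0:ℝ) sStar) σ :=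
      ContinuousAt.comp_continuousWithinAt (f := fun σ : ℝ => 1 + σ • A (c σ x)) h1 (hwcont σ hσ)
    exact h2
  have hGvcont : ContinuousOn Gv (Set.Icc (0:ℝ) sStar) :=
    hGc.continuous.comp_continuousOn hCcx
  have hF'cont : ContinuousOn F' (Set.Icc (0:ℝ) sStar) := by
    refine ContinuousOn.const_smul ?_ 2
    exact ((innerSL ℝ).continuous.comp_continuousOn hGvcont).clm_comp
      ((hAcont.comp_continuousOn hCcx).clm_comp hBcont)
  have hWcont : ContinuousOn (fun σ => -((A (c σ x)) ((B σ) (Gv σ)))) (Set.Icc (0:ℝ) sStar) :=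
    (((hAcont.comp_continuousOn hCcx).clm_apply (hBcont.clm_apply hGvcont))).neg
  -- derivative facts
  have hderiv_pair : ∀ σ ∈ Set.Ioo (0:ℝ) s,
      HasFDerivAt (fun z => c σ z) (B σ) x ∧
      HasDerivAt (fun a => c a x) (-((B σ) (Gv σ))) σ := by
    intro σ hσ
    exact aux_deriv hφ hKH' hsK hbij ⟨hσ.1, lt_of_lt_of_le hσ.2 hssStar⟩ x
  -- interval facts
  have hIoc : Set.uIoc (0:ℝ) s = Set.Ioc 0 s := Set.uIoc_of_le hs0
  have huIcc : Set.uIcc (0:ℝ) s = Set.Icc 0 s := Set.uIcc_of_le hs0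
  have hIccsub : Set.Icc (0:ℝ) s ⊆ Set.Icc 0 sStar := Set.Icc_subset_Icc le_rfl hssStar
  have hIocsub : Set.Ioc (0:ℝ) s ⊆ Set.Icc 0 sStar := fun t ht => ⟨ht.1.le, ht.2.trans hssStar⟩
  -- parametric integral
  have hmeas : ∀ x' : EuclideanSpace ℝ (Fin d), AEStronglyMeasurable (fun σ => ‖gradient φ (c σ x')‖^2)
      (MeasureTheory.volume.restrict (Set.uIoc (0:ℝ) s)) := by
    intro x'
    rw [hIoc]
    exact (((hGc.continuous.comp_continuousOn (hCc x')).norm.pow 2).mono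
      hIocsub).aestronglyMeasurable measurableSet_Ioc
  have hint : IntervalIntegrable (fun σ => ‖gradient φ (c σ x)‖^2) MeasureTheory.volume 0 s := by
    apply ContinuousOn.intervalIntegrable
    rw [huIcc]
    exact ((hGc.continuous.comp_continuousOn hCcx).norm.pow 2).mono hIccsub
  have hF'meas : AEStronglyMeasurable F' (MeasureTheory.volume.restrict (Set.uIoc (0:ℝ) s)) := by
    rw [hIoc]
    exact (hF'cont.mono hIocsub).aestronglyMeasurable measurableSet_Ioc
  have haes : ∀ᵐ σ : ℝ, σ ≠ s := by
    refine ae_iff.mpr ?_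
    simp [not_not]
  have hlip : ∀ᵐ σ : ℝ, σ ∈ Set.uIoc (0:ℝ) s →
      LipschitzOnWith (Real.nnabs (2*Kg*(KH*L)))
        (fun x' => ‖gradient φ (c σ x')‖^2) (Metric.ball x 1) := by
    refine Filter.Eventually.of_forall (fun σ hσ => ?_)
    rw [hIoc] at hσ
    have hσ' : σ ∈ Set.Icc (0:ℝ) sStar := hIocsub hσ
    refine LipschitzWith.lipschitzOnWith (LipschitzWith.of_dist_le_mul
      (K := Real.nnabs (2*Kg*(KH*L))) (f := fun x' => ‖gradient φ (c σ x')‖^2) ?_)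
    intro x₁ x₂
    have hG1 := hKg (c σ x₁)
    have hG2 := hKg (c σ x₂)
    have hGd : ‖gradient φ (c σ x₁) - gradient φ (c σ x₂)‖ ≤ KH * ‖c σ x₁ - c σ x₂‖ :=
      aux_G_lip hφ hKH' _ _
    have hcd : ‖c σ x₁ - c σ x₂‖ ≤ L * ‖x₁ - x₂‖ := by
      have h := aux_key hφ hKg hKH' hsK hbij hσ' hσ' x₁ x₂
      simp only [sub_self, abs_zero, mul_zero, add_zero] at h
      rw [hLdef]
      exact h
    have hcoe : ((Real.nnabs (2*Kg*(KH*L))) : ℝ) = 2*Kg*(KH*L) := by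
      rw [Real.coe_nnabs, abs_of_nonneg (by positivity)]
    rw [Real.dist_eq, dist_eq_norm, hcoe]
    set u := gradient φ (c σ x₁)
    set v := gradient φ (c σ x₂)
    have habs : |‖u‖^2 - ‖v‖^2| ≤ (‖u‖+‖v‖) * ‖u - v‖ := by
      have h1 : ‖u‖^2 - ‖v‖^2 = (‖u‖-‖v‖)*(‖u‖+‖v‖) := by ring
      rw [h1, abs_mul]
      have h2 := abs_norm_sub_norm_le u v
      have h3 : |‖u‖+‖v‖| = ‖u‖+‖v‖ := abs_of_nonneg (by positivity)
      rw [h3, mul_comm]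
      exact mul_le_mul_of_nonneg_left h2 (by positivity)
    have h5 : ‖u - v‖ ≤ KH * (L * ‖x₁ - x₂‖) :=
      le_trans hGd (mul_le_mul_of_nonneg_left hcd hKH0)
    calc |‖u‖^2 - ‖v‖^2| ≤ (‖u‖+‖v‖) * ‖u - v‖ := habs
      _ ≤ (2*Kg) * (KH * (L * ‖x₁ - x₂‖)) := by
          apply mul_le_mul (by linarith) h5 (norm_nonneg _) (by linarith)
      _ = 2*Kg*(KH*L) * ‖x₁ - x₂‖ := by ring
  have hdiff : ∀ᵐ σ : ℝ, σ ∈ Set.uIoc (0:ℝ) s →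
      HasFDerivAt (fun x' => ‖gradient φ (c σ x')‖^2) (F' σ) x := by
    filter_upwards [haes] with σ hne hσ
    rw [hIoc] at hσ
    have hσ' : σ ∈ Set.Ioo (0:ℝ) s := ⟨hσ.1, lt_of_le_of_ne hσ.2 hne⟩
    have hx := (hderiv_pair σ hσ').1
    have hGd : HasFDerivAt (gradient φ) (A (c σ x)) (c σ x) :=
      (hGc.differentiable (by simp) _).hasFDerivAt
    have hcomp : HasFDerivAt (fun x' => gradient φ (c σ x')) ((A (c σ x)).comp (B σ)) x :=
      hGd.comp x hx
    exact hcomp.norm_sq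
  have key := intervalIntegral.hasFDerivAt_integral_of_dominated_loc_of_lip
    (μ := MeasureTheory.volume) (𝕜 := ℝ)
    (F := fun x' σ => ‖gradient φ (c σ x')‖^2) (F' := F') (a := 0) (b := s)
    (bound := fun _ => 2*Kg*(KH*L)) (Metric.ball_mem_nhds x one_pos) (Filter.Eventually.of_forall hmeas) hint
    hF'meas hlip intervalIntegrable_const hdiff
  -- FTC
  have hc0 : c 0 x = x := by
    have h1 : (fun y : EuclideanSpace ℝ (Fin d) => y + (0:ℝ) • gradient φ y) x = x := by simp
    calc c 0 x = Function.invFun (fun y : EuclideanSpace ℝ (Fin d) => y + (0:ℝ) • gradient φ y)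
          ((fun y : EuclideanSpace ℝ (Fin d) => y + (0:ℝ) • gradient φ y) x) := by rw [h1]
      _ = x := Function.leftInverse_invFun (hbij 0 ⟨le_refl 0, hsStar.le⟩).1 x
  have hVcont : ContinuousOn Gv (Set.Icc (0:ℝ) s) := hGvcont.mono hIccsub
  have hVderiv : ∀ σ ∈ Set.Ioo (0:ℝ) s,
      HasDerivWithinAt Gv (-((A (c σ x)) ((B σ) (Gv σ)))) (Set.Ioi σ) σ := by
    intro σ hσ
    have hcd := (hderiv_pair σ hσ).2
    have hGd : HasFDerivAt (gradient φ) (A (c σ x)) (c σ x) :=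
      (hGc.differentiable (by simp) _).hasFDerivAt
    have h := hGd.comp_hasDerivAt σ hcd
    have h' : HasDerivAt Gv ((A (c σ x)) (-((B σ) (Gv σ)))) σ := h
    simpa using h'.hasDerivWithinAt
  have hV'int : IntervalIntegrable (fun σ => -((A (c σ x)) ((B σ) (Gv σ))))
      MeasureTheory.volume 0 s := by
    apply ContinuousOn.intervalIntegrable
    rw [huIcc]
    exact hWcont.mono hIccsub
  have hftc := intervalIntegral.integral_eq_sub_of_hasDeriv_right_of_le hs0 hVcont hVderiv hV'int
  -- final algebra
  have hdual : ∀ σ ∈ Set.Icc (0:ℝ) s,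
      (InnerProductSpace.toDual ℝ (EuclideanSpace ℝ (Fin d))).symm (F' σ) = (2:ℝ) • ((A (c σ x)) ((B σ) (Gv σ))) := by
    intro σ hσ
    have h := aux_ptwise hφ (c σ x) (hIsU σ (hIccsub hσ))
    refine h.trans ?_
    rw [← Nat.cast_smul_eq_nsmul ℝ 2]
    norm_num
    rfl
  have hintF' := key.1
  have hdual' : ∀ σ ∈ Set.Icc (0:ℝ) s, F' σ = InnerProductSpace.toDual ℝ
      (EuclideanSpace ℝ (Fin d)) ((2:ℝ) • ((A (c σ x)) ((B σ) (Gv σ)))) := by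
    intro σ hσ
    rw [← hdual σ hσ, LinearIsometryEquiv.apply_symm_apply]
  have hzcont : ContinuousOn (fun σ => (2:ℝ) • ((A (c σ x)) ((B σ) (Gv σ))))
      (Set.Icc (0:ℝ) sStar) :=
    ((hAcont.comp_continuousOn hCcx).clm_apply (hBcont.clm_apply hGvcont)).const_smul (2:ℝ)
  have hzint : IntervalIntegrable (fun σ => (2:ℝ) • ((A (c σ x)) ((B σ) (Gv σ))))
      MeasureTheory.volume 0 s := by
    apply ContinuousOn.intervalIntegrable
    rw [huIcc]
    exact hzcont.mono hIccsub
  have h3 : ∫ σ in (0:ℝ)..s, (A (c σ x)) ((B σ) (Gv σ)) = Gv 0 - Gv s := by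
    have h4 := hftc
    rw [intervalIntegral.integral_neg] at h4
    rw [neg_eq_iff_eq_neg.mp h4, neg_sub]
  have hzint2 : ∫ σ in (0:ℝ)..s, (2:ℝ) • ((A (c σ x)) ((B σ) (Gv σ))) =
      (2:ℝ) • (Gv 0 - Gv s) := by
    rw [intervalIntegral.integral_smul, h3]
  have hgradx : InnerProductSpace.toDual ℝ (EuclideanSpace ℝ (Fin d)) (gradient φ x) = fderiv ℝ φ x :=
    (InnerProductSpace.toDual ℝ (EuclideanSpace ℝ (Fin d))).apply_symm_apply _
  have hφd : HasFDerivAt φ (InnerProductSpace.toDual ℝ (EuclideanSpace ℝ (Fin d)) (gradient φ x)) x := by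
    rw [hgradx]
    exact (hφ.differentiable (by simp) x).hasFDerivAt
  have hmain : HasFDerivAt
      (fun x' => φ x' - (1/2 : ℝ) * ∫ σ in (0:ℝ)..s, ‖gradient φ (c σ x')‖^2)
      ((InnerProductSpace.toDual ℝ (EuclideanSpace ℝ (Fin d)) (gradient φ x)) -
        (1/2 : ℝ) • (∫ σ in (0:ℝ)..s, F' σ)) x :=
    hφd.sub (key.2.const_mul (1/2 : ℝ))
  have hGv0 : Gv 0 = gradient φ x := by rw [hGvdef]; simp only []; rw [hc0]
  have hval : (InnerProductSpace.toDual ℝ (EuclideanSpace ℝ (Fin d)) (gradient φ x)) -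
      (1/2 : ℝ) • (∫ σ in (0:ℝ)..s, F' σ) =
      InnerProductSpace.toDual ℝ (EuclideanSpace ℝ (Fin d)) (Gv s) := by
    refine ContinuousLinearMap.ext fun w => ?_
    rw [ContinuousLinearMap.sub_apply, ContinuousLinearMap.smul_apply]
    have e1 : (∫ σ in (0:ℝ)..s, F' σ) w = ∫ σ in (0:ℝ)..s, (F' σ) w :=
      ContinuousLinearMap.intervalIntegral_apply hintF' w
    have e3 : ∫ σ in (0:ℝ)..s, (F' σ) w =
        ∫ σ in (0:ℝ)..s, (innerSL ℝ w) ((2:ℝ) • ((A (c σ x)) ((B σ) (Gv σ)))) := by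
      refine intervalIntegral.integral_congr (fun σ hσ => ?_)
      rw [hdual' σ (huIcc ▸ hσ), InnerProductSpace.toDual_apply_apply, innerSL_apply_apply, real_inner_comm]
    have e4 : ∫ σ in (0:ℝ)..s, (innerSL ℝ w) ((2:ℝ) • ((A (c σ x)) ((B σ) (Gv σ)))) =
        (innerSL ℝ w) ((2:ℝ) • (Gv 0 - Gv s)) := by
      rw [ContinuousLinearMap.intervalIntegral_comp_comm (innerSL ℝ w) hzint, hzint2]
    rw [e1, e3, e4, InnerProductSpace.toDual_apply_apply, InnerProductSpace.toDual_apply_apply, innerSL_apply_apply,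
      hGv0, inner_smul_right, inner_sub_right, smul_eq_mul,
      real_inner_comm w (gradient φ x), real_inner_comm w (Gv s)]
    ring
  have hfun : ϕ s = fun x' => φ x' - (1/2 : ℝ) * ∫ σ in (0:ℝ)..s, ‖gradient φ (c σ x')‖^2 :=
    funext fun x' => hϕ s hs x'
  have hgrad : HasGradientAt (ϕ s) (Gv s) x := by
    show HasFDerivAt (ϕ s) (InnerProductSpace.toDual ℝ (EuclideanSpace ℝ (Fin d)) (Gv s)) x
    rw [hfun, ← hval]
    exact hmain
  exact hgrad.gradient
end

section
/- Let φ : ℝ^d → ℝ be C^∞ with bounded gradient and Hessian, s* > 0 with s*·‖D²φ‖_∞ < 1, and let ϕ be the solution of the eikonal equation ∂_s ϕ + (1/2)|∇ϕ|² = 0, ϕ(0,·) = φ, on [0, s*] × ℝ^d. Then for all s ∈ [0, s*] and x ∈ ℝ^d, |ϕ(s,x) − φ(x) + (s/2)|∇φ(x)|²| ≤ s² · ‖D²φ‖_∞ · ‖∇φ‖_∞². -/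
open MeasureTheory

/-- Quantitative estimate for the eikonal solution:
`|ϕ(s,x) - φ(x) + (s/2)|∇φ(x)|²| ≤ s² ‖D²φ‖∞ ‖∇φ‖∞²`. -/
theorem eikonal_time_expansion_bound (d : ℕ) (φ : EuclideanSpace ℝ (Fin d) → ℝ)
    (hφ : ContDiff ℝ (⊤ : ℕ∞) φ) (Kg KH : ℝ)
    (hKg : ∀ x, ‖gradient φ x‖ ≤ Kg)
    (hKH : ∀ x, ‖fderiv ℝ (fun y => gradient φ y) x‖ ≤ KH)
    (sStar : ℝ) (hsStar : 0 < sStar) (hsK : sStar * KH < 1)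
    (hbij : ∀ s ∈ Set.Icc (0 : ℝ) sStar,
      Function.Bijective (fun y => y + s • gradient φ y))
    (ϕ : ℝ → EuclideanSpace ℝ (Fin d) → ℝ)
    (hϕ : ∀ s ∈ Set.Icc (0 : ℝ) sStar, ∀ x, ϕ s x = φ x - (1/2) *
      ∫ σ in (0 : ℝ)..s,
        ‖gradient φ (Function.invFun (fun y => y + σ • gradient φ y) x)‖ ^ 2)
    (s : ℝ) (hs : s ∈ Set.Icc (0 : ℝ) sStar) (x : EuclideanSpace ℝ (Fin d)) :
    |ϕ s x - φ x + (s / 2) * ‖gradient φ x‖ ^ 2| ≤ s ^ 2 * KH * Kg ^ 2 := by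
  obtain ⟨hs0, hssStar⟩ := hs
  set G : EuclideanSpace ℝ (Fin d) → EuclideanSpace ℝ (Fin d) :=
    fun y => gradient φ y with hGdef
  have hKg0 : 0 ≤ Kg := le_trans (norm_nonneg _) (hKg x)
  have hKH0 : 0 ≤ KH := le_trans (norm_nonneg _) (hKH x)
  -- differentiability of the gradient
  have hGdiff : Differentiable ℝ G := by
    have h1 : Differentiable ℝ (fderiv ℝ φ) :=
      (hφ.fderiv_right (m := 1) (by exact WithTop.coe_le_coe.mpr le_top)).differentiable one_ne_zero
    intro y
    exact ((InnerProductSpace.toDual ℝ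
      (EuclideanSpace ℝ (Fin d))).symm.differentiableAt).comp y (h1 y)
  -- Lipschitz estimate for the gradient
  have hLip : ∀ a b : EuclideanSpace ℝ (Fin d), ‖G a - G b‖ ≤ KH * ‖a - b‖ := by
    intro a b
    exact Convex.norm_image_sub_le_of_norm_fderiv_le
      (fun y _ => (hGdiff y)) (fun y _ => hKH y) convex_univ (Set.mem_univ b)
      (Set.mem_univ a)
  -- the characteristic inverse map
  set g : ℝ → EuclideanSpace ℝ (Fin d) := fun σ => Function.invFun (fun y => y + σ • gradient φ y) x with hgdef
  have heq : ∀ σ ∈ Set.Icc (0 : ℝ) sStar, g σ + σ • G (g σ) = x := by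
    intro σ hσ
    have := Function.rightInverse_invFun (hbij σ hσ).surjective x
    simpa [hGdef, hgdef] using this
  have hsub : ∀ σ ∈ Set.Icc (0 : ℝ) sStar, x - g σ = σ • G (g σ) := by
    intro σ hσ
    have := heq σ hσ
    rw [← this]; abel
  have hdist : ∀ σ ∈ Set.Icc (0 : ℝ) sStar, ‖x - g σ‖ ≤ σ * Kg := by
    intro σ hσ
    rw [hsub σ hσ, norm_smul, Real.norm_eq_abs, abs_of_nonneg hσ.1]
    exact mul_le_mul_of_nonneg_left (hKg _) hσ.1
  -- Lipschitz estimate for g on [0, sStar]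
  have hone : 0 < 1 - sStar * KH := by linarith
  set L : ℝ := Kg / (1 - sStar * KH) with hLdef
  have hL0 : 0 ≤ L := div_nonneg hKg0 hone.le
  have hgLip : ∀ σ ∈ Set.Icc (0 : ℝ) sStar, ∀ τ ∈ Set.Icc (0 : ℝ) sStar,
      ‖g σ - g τ‖ ≤ L * |σ - τ| := by
    intro σ hσ τ hτ
    have h1 : g σ - g τ = τ • (G (g τ) - G (g σ)) + (τ - σ) • G (g σ) := by
      have e1 := heq σ hσ
      have e2 := heq τ hτ
      have : g σ + σ • G (g σ) = g τ + τ • G (g τ) := by rw [e1, e2]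
      have : g σ - g τ = τ • G (g τ) - σ • G (g σ) := by
        rw [eq_sub_iff_add_eq]
        calc g σ - g τ + σ • G (g σ) = g σ + σ • G (g σ) - g τ := by abel
        _ = τ • G (g τ) := by rw [this]; abel
      rw [this, smul_sub, sub_smul]; abel
    have h2 : ‖g σ - g τ‖ ≤ τ * (KH * ‖g τ - g σ‖) + |τ - σ| * Kg := by
      rw [h1]
      calc ‖τ • (G (g τ) - G (g σ)) + (τ - σ) • G (g σ)‖
          ≤ ‖τ • (G (g τ) - G (g σ))‖ + ‖(τ - σ) • G (g σ)‖ := norm_add_le _ _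
        _ ≤ τ * (KH * ‖g τ - g σ‖) + |τ - σ| * Kg := by
            rw [norm_smul, norm_smul, Real.norm_eq_abs, Real.norm_eq_abs,
              abs_of_nonneg hτ.1]
            have h5 : ‖G (g τ) - G (g σ)‖ ≤ KH * ‖g τ - g σ‖ := hLip _ _
            have h6 : ‖G (g σ)‖ ≤ Kg := hKg _
            have := mul_le_mul_of_nonneg_left h5 hτ.1
            have := mul_le_mul_of_nonneg_left h6 (abs_nonneg (τ - σ))
            linarith
    have h3 : τ * (KH * ‖g τ - g σ‖) ≤ sStar * KH * ‖g σ - g τ‖ := by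
      rw [norm_sub_rev (g τ)]
      have : τ * (KH * ‖g σ - g τ‖) ≤ sStar * (KH * ‖g σ - g τ‖) := by
        apply mul_le_mul_of_nonneg_right hτ.2 (by positivity)
      linarith [this]
    have h4 : (1 - sStar * KH) * ‖g σ - g τ‖ ≤ Kg * |σ - τ| := by
      rw [abs_sub_comm] at h2
      nlinarith [h2, h3]
    rw [hLdef, div_mul_eq_mul_div, le_div_iff₀ hone, mul_comm (‖g σ - g τ‖)]
    exact h4
  -- continuity of g, hence integrability
  have hgCont : ContinuousOn g (Set.Icc (0 : ℝ) sStar) := by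
    apply LipschitzOnWith.continuousOn (K := Real.toNNReal L)
    apply LipschitzOnWith.of_dist_le_mul
    intro σ hσ τ hτ
    rw [Real.dist_eq, dist_eq_norm]
    calc ‖g σ - g τ‖ ≤ L * |σ - τ| := hgLip σ hσ τ hτ
      _ = Real.toNNReal L * |σ - τ| := by rw [Real.coe_toNNReal L hL0]
  set h : ℝ → ℝ := fun σ => ‖G (g σ)‖ ^ 2 with hhdef
  have hIccsub : Set.uIcc (0 : ℝ) s ⊆ Set.Icc (0 : ℝ) sStar := by
    rw [Set.uIcc_of_le hs0]
    exact Set.Icc_subset_Icc le_rfl hssStar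
  have hhCont : ContinuousOn h (Set.uIcc (0 : ℝ) s) :=
    (((hGdiff.continuous.comp_continuousOn hgCont).norm.pow 2).mono hIccsub)
  have hhInt : IntervalIntegrable h volume 0 s := hhCont.intervalIntegrable
  -- the pointwise bound on the integrand
  set c : ℝ := ‖G x‖ ^ 2 with hcdef
  have hpt : ∀ σ ∈ Set.Icc (0 : ℝ) s, |c - h σ| ≤ σ * (2 * KH * Kg ^ 2) := by
    intro σ hσ
    have hσ' : σ ∈ Set.Icc (0 : ℝ) sStar := ⟨hσ.1, hσ.2.trans hssStar⟩
    have hab : |‖G x‖ - ‖G (g σ)‖| ≤ KH * (σ * Kg) := by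
      calc |‖G x‖ - ‖G (g σ)‖| ≤ ‖G x - G (g σ)‖ := abs_norm_sub_norm_le _ _
        _ ≤ KH * ‖x - g σ‖ := hLip _ _
        _ ≤ KH * (σ * Kg) := by gcongr; exact hdist σ hσ'
    have hsum : ‖G x‖ + ‖G (g σ)‖ ≤ 2 * Kg := by
      have := hKg x; have := hKg (g σ); simp only [hGdef]; linarith
    have hfact : c - h σ = (‖G x‖ - ‖G (g σ)‖) * (‖G x‖ + ‖G (g σ)‖) := by
      rw [hcdef, hhdef]; ring
    rw [hfact, abs_mul, abs_of_nonneg (add_nonneg (norm_nonneg _) (norm_nonneg _))]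
    calc |‖G x‖ - ‖G (g σ)‖| * (‖G x‖ + ‖G (g σ)‖)
        ≤ (KH * (σ * Kg)) * (2 * Kg) := by
          apply mul_le_mul hab hsum (add_nonneg (norm_nonneg _) (norm_nonneg _))
            (mul_nonneg hKH0 (mul_nonneg hσ.1 hKg0))
      _ = σ * (2 * KH * Kg ^ 2) := by ring
  -- rewrite the quantity as an integral
  have hval : ϕ s x - φ x + (s / 2) * ‖gradient φ x‖ ^ 2
      = (1/2) * ∫ σ in (0:ℝ)..s, (c - h σ) := by
    rw [hϕ s ⟨hs0, hssStar⟩ x,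
      intervalIntegral.integral_sub (intervalIntegrable_const) hhInt,
      intervalIntegral.integral_const]
    simp only [hcdef, hhdef, hGdef, smul_eq_mul, sub_zero]
    ring
  rw [hval, abs_mul, abs_of_nonneg (by norm_num : (0:ℝ) ≤ 1/2)]
  have hIntAbs : |∫ σ in (0:ℝ)..s, (c - h σ)| ≤ ∫ σ in (0:ℝ)..s, |c - h σ| :=
    intervalIntegral.abs_integral_le_integral_abs hs0
  have hSubInt : IntervalIntegrable (fun σ => c - h σ) volume 0 s :=
    intervalIntegrable_const.sub hhInt
  have hMono : (∫ σ in (0:ℝ)..s, |c - h σ|)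
      ≤ ∫ σ in (0:ℝ)..s, σ * (2 * KH * Kg ^ 2) := by
    apply intervalIntegral.integral_mono_on hs0 hSubInt.abs
    · exact ((continuous_id.mul continuous_const).intervalIntegrable 0 s)
    · exact hpt
  have hEval : (∫ σ in (0:ℝ)..s, σ * (2 * KH * Kg ^ 2)) = s ^ 2 * KH * Kg ^ 2 := by
    rw [intervalIntegral.integral_mul_const, integral_id]
    ring
  calc (1/2 : ℝ) * |∫ σ in (0:ℝ)..s, (c - h σ)|
      ≤ (1/2) * (s ^ 2 * KH * Kg ^ 2) := by
        apply mul_le_mul_of_nonneg_left _ (by norm_num)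
        calc |∫ σ in (0:ℝ)..s, (c - h σ)| ≤ _ := hIntAbs
          _ ≤ _ := hMono
          _ = s ^ 2 * KH * Kg ^ 2 := hEval
    _ ≤ s ^ 2 * KH * Kg ^ 2 := by
        have hX : 0 ≤ s ^ 2 * KH * Kg ^ 2 := by positivity
        linarith
end
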